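/- arXiv:1407.4500 — 5 statements merged into one kernel-verified Lean document; each statement's English description precedes it below -/
import Mathlib

section
/- Let r ≥ 1 be an integer and a_1, …, a_r real numbers with a_m ≥ 1 for all m. Then for every t > 0, the second derivative of the function Ψ(t) = (2 − r)·log(sinh(t/2)) + Σ_{m=1}^r log(sinh(t/(2a_m))) is strictly negative; equivalently, −4Ψ''(t) = 2/sinh²(t/2) + Σ_{m=1}^r (1/(a_m² sinh²(t/(2a_m))) − 1/sinh²(t/2)) > 0. -/
/-!
Since `(log sinh (t/c))'' = −1/(c² sinh²(t/c))`, the summand of `−4Ψ''(t)` attached to `a`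
is `1/(a² sinh²(t/(2a))) − 1/sinh²(t/2)`, which is nonnegative because `a · sinh(x/a) ≤ sinh x`
for `a ≥ 1` and `x ≥ 0`: this is the convexity of `sinh` on `[0, ∞)` together with `sinh 0 = 0`.
-/

open Real Finset Filter Topology

lemma Real.convexOn_sinh : ConvexOn ℝ (Set.Ici 0) sinh := by
  refine MonotoneOn.convexOn_of_deriv (convex_Ici 0) continuous_sinh.continuousOn
    differentiable_sinh.differentiableOn ?_
  rw [deriv_sinh, interior_Ici]
  intro x hx y hy hxy
  rw [cosh_le_cosh, abs_of_pos hx, abs_of_pos hy]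
  exact hxy

lemma Real.sinh_mul_le_mul_sinh {c x : ℝ} (hc₀ : 0 ≤ c) (hc₁ : c ≤ 1) (hx : 0 ≤ x) :
    sinh (c * x) ≤ c * sinh x := by
  simpa using convexOn_sinh.2 (Set.mem_Ici.2 hx) Set.self_mem_Ici hc₀ (sub_nonneg.2 hc₁)
    (add_sub_cancel c 1)

lemma Real.mul_sinh_div_le_sinh {a x : ℝ} (ha : 1 ≤ a) (hx : 0 ≤ x) :
    a * sinh (x / a) ≤ sinh x := by
  have ha₀ : 0 < a := one_pos.trans_le ha
  have h := sinh_mul_le_mul_sinh (inv_nonneg.2 ha₀.le) (inv_le_one_of_one_le₀ ha) hx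
  calc a * sinh (x / a) = a * sinh (a⁻¹ * x) := by rw [inv_mul_eq_div]
    _ ≤ a * (a⁻¹ * sinh x) := mul_le_mul_of_nonneg_left h ha₀.le
    _ = sinh x := mul_inv_cancel_left₀ ha₀.ne' _

lemma Real.one_div_sinh_sq_le {a x : ℝ} (ha : 1 ≤ a) (hx : 0 < x) :
    1 / sinh x ^ 2 ≤ 1 / (a ^ 2 * sinh (x / a) ^ 2) := by
  have hpos : 0 < a * sinh (x / a) :=
    mul_pos (one_pos.trans_le ha) (sinh_pos_iff.2 (div_pos hx (one_pos.trans_le ha)))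
  rw [← mul_pow]
  exact one_div_le_one_div_of_le (pow_pos hpos 2)
    (pow_le_pow_left₀ hpos.le (mul_sinh_div_le_sinh ha hx.le) 2)

lemma Real.hasDerivAt_log_sinh_div {c s : ℝ} (hc : c ≠ 0) (hs : s ≠ 0) :
    HasDerivAt (fun u => log (sinh (u / c))) (cosh (s / c) / (c * sinh (s / c))) s := by
  have hsinh : sinh (s / c) ≠ 0 := sinh_ne_zero.2 (div_ne_zero hs hc)
  have hlin : HasDerivAt (fun u : ℝ => u / c) (1 / c) s := (hasDerivAt_id s).div_const c
  refine hlin.sinh.log hsinh |>.congr_deriv ?_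
  ring

lemma Real.hasDerivAt_cosh_div_mul_sinh_div {c s : ℝ} (hc : c ≠ 0) (hs : s ≠ 0) :
    HasDerivAt (fun u => cosh (u / c) / (c * sinh (u / c)))
      (-1 / (c ^ 2 * sinh (s / c) ^ 2)) s := by
  have hsinh : sinh (s / c) ≠ 0 := sinh_ne_zero.2 (div_ne_zero hs hc)
  have hlin : HasDerivAt (fun u : ℝ => u / c) (1 / c) s := (hasDerivAt_id s).div_const c
  refine hlin.cosh.fun_div (hlin.sinh.const_mul c) (mul_ne_zero hc hsinh) |>.congr_deriv ?_
  field_simp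
  linear_combination -cosh_sq_sub_sinh_sq (s / c)

lemma deriv_deriv_eq_of_hasDerivAt {𝕜 F : Type*} [NontriviallyNormedField 𝕜]
    [NormedAddCommGroup F] [NormedSpace 𝕜 F] {f f' : 𝕜 → F} {f'' : F} {t : 𝕜}
    (hf : ∀ᶠ s in 𝓝 t, HasDerivAt f (f' s) s) (hf' : HasDerivAt f' f'' t) :
    deriv (deriv f) t = f'' :=
  (hf'.congr_of_eventuallyEq (hf.mono fun _ hs => hs.deriv)).deriv

theorem psi_second_deriv_neg_general (r : ℕ) (a : Fin r → ℝ) (ha : ∀ m, 1 ≤ a m)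
    (t : ℝ) (ht : 0 < t) :
    let Ψ : ℝ → ℝ := fun s =>
      (2 - (r : ℝ)) * Real.log (Real.sinh (s / 2)) +
        ∑ m, Real.log (Real.sinh (s / (2 * a m)))
    deriv (deriv Ψ) t < 0 ∧
      -4 * deriv (deriv Ψ) t =
        2 / (Real.sinh (t / 2)) ^ 2 +
          ∑ m, (1 / ((a m) ^ 2 * (Real.sinh (t / (2 * a m))) ^ 2) -
            1 / (Real.sinh (t / 2)) ^ 2) ∧
      0 < 2 / (Real.sinh (t / 2)) ^ 2 +
          ∑ m, (1 / ((a m) ^ 2 * (Real.sinh (t / (2 * a m))) ^ 2) -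
            1 / (Real.sinh (t / 2)) ^ 2) := by
  intro Ψ
  have hc : ∀ m, 2 * a m ≠ 0 := fun m => by linarith [ha m]
  have hΨ'' : deriv (deriv Ψ) t = (2 - (r : ℝ)) * (-1 / (2 ^ 2 * sinh (t / 2) ^ 2)) +
      ∑ m, -1 / ((2 * a m) ^ 2 * sinh (t / (2 * a m)) ^ 2) := by
    refine deriv_deriv_eq_of_hasDerivAt ?_ <|
      ((hasDerivAt_cosh_div_mul_sinh_div two_ne_zero ht.ne').const_mul _).add <|
        HasDerivAt.fun_sum fun m _ => hasDerivAt_cosh_div_mul_sinh_div (hc m) ht.ne'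
    filter_upwards [Ioi_mem_nhds ht] with s hs
    exact ((hasDerivAt_log_sinh_div two_ne_zero hs.ne').const_mul _).add <|
      HasDerivAt.fun_sum fun m _ => hasDerivAt_log_sinh_div (hc m) hs.ne'
  have hformula : -4 * deriv (deriv Ψ) t = 2 / sinh (t / 2) ^ 2 +
      ∑ m, (1 / (a m ^ 2 * sinh (t / (2 * a m)) ^ 2) - 1 / sinh (t / 2) ^ 2) := by
    have hterm : ∀ m, -4 * (-1 / ((2 * a m) ^ 2 * sinh (t / (2 * a m)) ^ 2)) =
        1 / (a m ^ 2 * sinh (t / (2 * a m)) ^ 2) := fun m => by ring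
    simp only [hΨ'', mul_add, mul_sum, hterm, sum_sub_distrib, sum_const, card_univ,
      Fintype.card_fin, nsmul_eq_mul]
    ring
  have hpos : 0 < 2 / sinh (t / 2) ^ 2 +
      ∑ m, (1 / (a m ^ 2 * sinh (t / (2 * a m)) ^ 2) - 1 / sinh (t / 2) ^ 2) := by
    refine add_pos_of_pos_of_nonneg (div_pos two_pos (pow_pos (sinh_pos_iff.2 (half_pos ht)) 2))
      (sum_nonneg fun m _ => sub_nonneg.2 ?_)
    simpa only [div_div] using one_div_sinh_sq_le (ha m) (half_pos ht)
  exact ⟨by linarith, hformula, hpos⟩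

/-- For `r ≥ 1` and reals `a_m ≥ 1`, the interaction potential
`Ψ(t) = (2 − r) log(sinh(t/2)) + Σ_m log(sinh(t/(2 a_m)))` has strictly negative second
derivative on `(0,∞)`; equivalently
`−4Ψ''(t) = 2/sinh²(t/2) + Σ_m (1/(a_m² sinh²(t/(2a_m))) − 1/sinh²(t/2)) > 0`. -/
theorem psi_second_deriv_neg (r : ℕ) (hr : 1 ≤ r) (a : Fin r → ℝ) (ha : ∀ m, 1 ≤ a m)
    (t : ℝ) (ht : 0 < t) :
    let Ψ : ℝ → ℝ := fun s =>
      (2 - (r : ℝ)) * Real.log (Real.sinh (s / 2)) +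
        ∑ m, Real.log (Real.sinh (s / (2 * a m)))
    deriv (deriv Ψ) t < 0 ∧
      -4 * deriv (deriv Ψ) t =
        2 / (Real.sinh (t / 2)) ^ 2 +
          ∑ m, (1 / ((a m) ^ 2 * (Real.sinh (t / (2 * a m))) ^ 2) -
            1 / (Real.sinh (t / 2)) ^ 2) ∧
      0 < 2 / (Real.sinh (t / 2)) ^ 2 +
          ∑ m, (1 / ((a m) ^ 2 * (Real.sinh (t / (2 * a m))) ^ 2) -
            1 / (Real.sinh (t / 2)) ^ 2) :=
  psi_second_deriv_neg_general r a ha t ht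
end

section
/- For every real x > 0, −coth(x) + coth(2x) + 2·coth(4x) = tanh(x)·(4·sinh²(x) + 3)/(2·sinh²(x) + 1). In particular the left-hand side is strictly positive for x > 0. -/
/-- The real hyperbolic cotangent. -/
noncomputable def coth (x : ℝ) : ℝ := Real.cosh x / Real.sinh x

/-!
Double the angle twice: with `s = sinh x`, `c = cosh x`, both `coth (2x)` and `coth (4x)` are
rational in `s` and `c`, and after clearing denominators the identity reduces to a polynomial
identity modulo `c² = s² + 1`. Positivity is then read off the right-hand side.
-/

open Real

lemma coth_two_mul (x : ℝ) : coth (2 * x) = (cosh x ^ 2 + sinh x ^ 2) / (2 * sinh x * cosh x) := by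
  rw [coth, cosh_two_mul, sinh_two_mul]

lemma tanh_pos_of_pos {x : ℝ} (hx : 0 < x) : 0 < tanh x := by
  have := sinh_pos_iff.2 hx
  rw [tanh_eq_sinh_div_cosh]
  positivity

lemma neg_coth_add_coth_two_mul_add_two_mul_coth_four_mul {x : ℝ} (hx : x ≠ 0) :
    -coth x + coth (2 * x) + 2 * coth (4 * x) =
      tanh x * (4 * sinh x ^ 2 + 3) / (2 * sinh x ^ 2 + 1) := by
  have hs : sinh x ≠ 0 := sinh_ne_zero.2 hx
  have hc : cosh x ≠ 0 := (cosh_pos x).ne'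
  rw [show 4 * x = 2 * (2 * x) by ring, coth_two_mul, coth_two_mul, coth, tanh_eq_sinh_div_cosh,
    cosh_two_mul, sinh_two_mul]
  field_simp
  linear_combination (4 * sinh x ^ 4) * cosh_sq x

/-- For every real `x > 0`,
`−coth(x) + coth(2x) + 2 coth(4x) = tanh(x)·(4 sinh²(x) + 3)/(2 sinh²(x) + 1)`,
and in particular the left-hand side is strictly positive. -/
theorem coth_identity_244 (x : ℝ) (hx : 0 < x) :
    -coth x + coth (2 * x) + 2 * coth (4 * x) =
      Real.tanh x * (4 * (Real.sinh x) ^ 2 + 3) / (2 * (Real.sinh x) ^ 2 + 1) ∧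
      0 < -coth x + coth (2 * x) + 2 * coth (4 * x) := by
  have h := neg_coth_add_coth_two_mul_add_two_mul_coth_four_mul hx.ne'
  have := tanh_pos_of_pos hx
  exact ⟨h, h ▸ by positivity⟩
end

section
/- Let G be a finite group, K a field, and α̂ ∈ K[G] with α̂(id) = 2 and α̂(g) = α̂(g⁻¹). Define T̂_g(v) = v − v(g)·(α̂ · ê_g) on K[G]. If g, h ∈ G are distinct and α̂(gh⁻¹) = 0, then T̂_g and T̂_h commute. -/
/-!
`T̂_k` is the transvection `v ↦ v + f v • w` with linear form `f = -(v ↦ v(k))` and vector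
`w = α * e_k`. Two transvections commute as soon as each form kills the other's vector, and the
coefficient of `α * e_h` at `g` is `α(g h⁻¹)`, which vanishes together with `α(h g⁻¹)` by symmetry.
-/

open Module

theorem LinearMap.transvection_commute {R V : Type*} [Semiring R] [AddCommMonoid V] [Module R V]
    {f g : Dual R V} {v w : V} (hfw : f w = 0) (hgv : g v = 0) :
    Commute (transvection f v) (transvection g w) := by
  ext x
  simp only [Module.End.mul_apply, transvection.apply, map_add, map_smul, hfw, hgv, zero_smul,
    add_zero]
  exact add_right_comm _ _ _

namespace MonoidAlgebra

variable {K G : Type*}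

noncomputable def coeffDual [Semiring K] (k : G) : Dual K K[G] :=
  Finsupp.lapply k ∘ₗ (coeffLinearEquiv K).toLinearMap

@[simp]
theorem coeffDual_apply [Semiring K] (k : G) (v : K[G]) : coeffDual k v = v.coeff k :=
  rfl

theorem sub_coeff_smul_eq_transvection [Ring K] (k : G) (w v : K[G]) :
    v - v.coeff k • w = LinearMap.transvection (-coeffDual k) w v := by
  rw [LinearMap.transvection.apply, LinearMap.neg_apply, coeffDual_apply, neg_smul, sub_eq_add_neg]

end MonoidAlgebra

theorem sheet_transitions_commute_general (G : Type*) [Group G]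
    (K : Type*) [Field K] (α : MonoidAlgebra K G)
    (hsym : ∀ g : G, α.coeff g = α.coeff g⁻¹) (g h : G) (hzero : α.coeff (g * h⁻¹) = 0) :
    let T : G → MonoidAlgebra K G → MonoidAlgebra K G :=
      fun k v => v - v.coeff k • (α * MonoidAlgebra.single k 1)
    ∀ v, T g (T h v) = T h (T g v) := by
  intro T v
  have hzero' : α.coeff (h * g⁻¹) = 0 := by rw [hsym, mul_inv_rev, inv_inv, hzero]
  have hcomm := LinearMap.transvection_commute (f := -MonoidAlgebra.coeffDual g)
    (g := -MonoidAlgebra.coeffDual h) (v := α * MonoidAlgebra.single g 1)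
    (w := α * MonoidAlgebra.single h 1) (by simp [hzero]) (by simp [hzero'])
  simp only [T, MonoidAlgebra.sub_coeff_smul_eq_transvection]
  exact LinearMap.congr_fun hcomm.eq v

/-- If `g ≠ h` and the structure constant `α(g h⁻¹)` vanishes, the sheet-transition
generators `T̂_g` and `T̂_h` commute. -/
theorem sheet_transitions_commute (G : Type*) [Group G] [Fintype G] [DecidableEq G]
    (K : Type*) [Field K] (α : MonoidAlgebra K G) (hid : α.coeff 1 = 2)
    (hsym : ∀ g : G, α.coeff g = α.coeff g⁻¹) (g h : G) (hgh : g ≠ h) (hzero : α.coeff (g * h⁻¹) = 0) :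
    let T : G → MonoidAlgebra K G → MonoidAlgebra K G :=
      fun k v => v - v.coeff k • (α * MonoidAlgebra.single k 1)
    ∀ v, T g (T h v) = T h (T g v) :=
  sheet_transitions_commute_general G K α hsym g h hzero
end

section
/- Fix an integer a ≥ 1 and α̂ ∈ ℤ^{Z_a} with α̂(0) = 2 and total mass c = Σ_l α̂(l) < 0. Let Ĝ be the group of linear automorphisms of ℤ^{Z_a} generated by the involutions T̂_j(v) = v − v(j)·(α̂ ⋆ ê_j), j ∈ Z_a. Then for every nonzero v ∈ ℤ^{Z_a}, the orbit Ĝ·v is infinite. In fact, already the set {n₀(w) : w ∈ Ĝ·v} of coordinate sums is infinite. -/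
/-- If `α ∈ ℤ^{Z_a}` has `α(0) = 2` and negative total mass `c < 0`, then for every
nonzero `v` the orbit of `v` under the group generated by the involutions
`T̂_j(w) = w − w(j)·(α ⋆ ê_j)` is infinite; in fact the set of coordinate sums of the
orbit is already infinite. -/
theorem negative_chi_infinite_orbit (a : ℕ) [NeZero a] (ha : 1 ≤ a)
    (α : ZMod a → ℤ) (h0 : α 0 = 2) (c : ℤ) (hc : ∑ l : ZMod a, α l = c) (hneg : c < 0)
    (v : ZMod a → ℤ) (hv : v ≠ 0) :
    let T : ZMod a → (ZMod a → ℤ) → (ZMod a → ℤ) :=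
      fun j w l => w l - w j * α (l - j)
    let step : (ZMod a → ℤ) → (ZMod a → ℤ) → Prop := fun x y => ∃ j, y = T j x
    {w | Relation.ReflTransGen step v w}.Infinite ∧
      {n : ℤ | ∃ w, Relation.ReflTransGen step v w ∧ (∑ l : ZMod a, w l) = n}.Infinite := by
  intro T step
  -- `T j` is an involution
  have hTT : ∀ j x, T j (T j x) = x := by
    intro j x
    funext l
    show (T j x) l - (T j x) j * α (l - j) = x l
    have hjj : (T j x) j = - x j := by
      show x j - x j * α (j - j) = - x j
      rw [sub_self, h0]; ring
    rw [hjj]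
    show (x l - x j * α (l - j)) - (- x j) * α (l - j) = x l
    ring
  -- sum formula
  have hb : ∀ j : ZMod a, (∑ l : ZMod a, α (l - j)) = c := by
    intro j
    rw [← hc]
    exact Fintype.sum_equiv (Equiv.subRight j) _ _ (fun l => rfl)
  have hsum : ∀ j x, (∑ l : ZMod a, T j x l) = (∑ l : ZMod a, x l) - x j * c := by
    intro j x
    show (∑ l : ZMod a, (x l - x j * α (l - j))) = _
    rw [Finset.sum_sub_distrib, ← Finset.mul_sum, hb]
  -- orbit elements are nonzero
  have hne : ∀ w, Relation.ReflTransGen step v w → w ≠ 0 := by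
    intro w h
    induction h with
    | refl => exact hv
    | @tail x y hxy hstep ih =>
      obtain ⟨j, rfl⟩ := hstep
      intro h0'
      apply ih
      funext l
      have h1 : T j (T j x) l = x l := by rw [hTT]
      rw [h0'] at h1
      have h2 : T j (0 : ZMod a → ℤ) l = 0 := by
        show (0 : ℤ) - 0 * α (l - j) = 0
        ring
      rw [h2] at h1
      exact h1.symm
  set S : Set ℤ := {n : ℤ | ∃ w, Relation.ReflTransGen step v w ∧ (∑ l : ZMod a, w l) = n}
    with hS
  have key : S.Infinite := by
    by_contra hfin
    rw [Set.not_infinite] at hfin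
    have hmem : (∑ l : ZMod a, v l) ∈ S := ⟨v, Relation.ReflTransGen.refl, rfl⟩
    have hFne : hfin.toFinset.Nonempty := ⟨_, hfin.mem_toFinset.mpr hmem⟩
    obtain hwmax := hfin.mem_toFinset.mp (hfin.toFinset.max'_mem hFne)
    obtain hwmin := hfin.mem_toFinset.mp (hfin.toFinset.min'_mem hFne)
    obtain ⟨w, hw, hws⟩ := hwmax
    obtain ⟨u, hu, hus⟩ := hwmin
    -- max witness has all coordinates ≤ 0
    have hwle : ∀ j, w j ≤ 0 := by
      intro j
      have hmemj : (∑ l : ZMod a, T j w l) ∈ S :=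
        ⟨T j w, hw.tail ⟨j, rfl⟩, rfl⟩
      have hle : (∑ l : ZMod a, T j w l) ≤ hfin.toFinset.max' hFne :=
        hfin.toFinset.le_max' _ (hfin.mem_toFinset.mpr hmemj)
      rw [hsum, hws] at hle
      nlinarith
    -- min witness has all coordinates ≥ 0
    have hule : ∀ j, 0 ≤ u j := by
      intro j
      have hmemj : (∑ l : ZMod a, T j u l) ∈ S :=
        ⟨T j u, hu.tail ⟨j, rfl⟩, rfl⟩
      have hge : hfin.toFinset.min' hFne ≤ (∑ l : ZMod a, T j u l) :=
        hfin.toFinset.min'_le _ (hfin.mem_toFinset.mpr hmemj)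
      rw [hsum, hus] at hge
      nlinarith
    have hwsum : (∑ l : ZMod a, w l) ≤ 0 :=
      Finset.sum_nonpos (fun l _ => hwle l)
    have husum : 0 ≤ (∑ l : ZMod a, u l) :=
      Finset.sum_nonneg (fun l _ => hule l)
    have husum' : (∑ l : ZMod a, u l) ≠ 0 := by
      intro h
      apply hne u hu
      funext l
      exact (Finset.sum_eq_zero_iff_of_nonneg (fun l _ => hule l)).mp h l (Finset.mem_univ l)
    have hlt : (0 : ℤ) < ∑ l : ZMod a, u l := lt_of_le_of_ne husum (Ne.symm husum')
    have hminmax : hfin.toFinset.min' hFne ≤ hfin.toFinset.max' hFne :=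
      hfin.toFinset.min'_le _ (hfin.toFinset.max'_mem hFne)
    rw [← hws, ← hus] at hminmax
    linarith
  refine ⟨?_, key⟩
  intro hfin
  apply key
  have hsub : S ⊆ (fun w => ∑ l : ZMod a, w l) '' {w | Relation.ReflTransGen step v w} := by
    rintro n ⟨w, hw, rfl⟩
    exact ⟨w, hw, rfl⟩
  exact Set.Finite.subset (hfin.image _) hsub
end

section
/- Let p ≥ 2 be an even integer and ζ a primitive p-th root of unity in ℂ. Then for all complex z, w with w ≠ ±ζ^ℓ z for all ℓ and z, w ≠ 0: Σ_{ℓ=0}^{p−1} (−1)^ℓ · ζ^ℓ/(w − ζ^ℓ z)² = (p²/4) · z^{p/2 − 1} · w^{p/2 − 1} · ( 1/(z^{p/2} − w^{p/2})² + 1/(z^{p/2} + w^{p/2})² ). -/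
/-!
Put `p = 2m` and `η = ζ²`, a primitive `m`-th root of unity. The even and odd terms of the
alternating sum are `Σ_k η^k / (w - η^k z')²` for `z' = z` and `z' = ζ z`. Since
`w^m - z'^m = ∏_k (w - η^k z')`, taking the logarithmic derivative in `w` gives
`Σ_k 1 / (w - η^k z') = m w^(m-1) / (w^m - z'^m)`, and differentiating this in `z'` gives
`Σ_k η^k / (w - η^k z')² = m² z'^(m-1) w^(m-1) / (w^m - z'^m)²`. Finally `ζ^m = -1`, so
`(ζ z)^m = -z^m` and the odd terms produce the `1 / (z^m + w^m)²` summand.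
-/

open Finset Polynomial Filter Topology

theorem sum_range_two_mul {M : Type*} [AddCommMonoid M] (f : ℕ → M) (m : ℕ) :
    ∑ ℓ ∈ range (2 * m), f ℓ = ∑ k ∈ range m, (f (2 * k) + f (2 * k + 1)) := by
  induction m with
  | zero => simp
  | succ m ih => rw [Nat.mul_succ, sum_range_succ, sum_range_succ, ih, sum_range_succ, add_assoc]

theorem sum_range_two_mul_neg_one_pow_mul_div_sq {K : Type*} [Field K] (ζ z w : K) (m : ℕ) :
    ∑ ℓ ∈ range (2 * m), (-1) ^ ℓ * ζ ^ ℓ / (w - ζ ^ ℓ * z) ^ 2 =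
      ∑ k ∈ range m, (ζ ^ 2) ^ k / (w - (ζ ^ 2) ^ k * z) ^ 2 -
        ζ * ∑ k ∈ range m, (ζ ^ 2) ^ k / (w - (ζ ^ 2) ^ k * (ζ * z)) ^ 2 := by
  rw [sum_range_two_mul, mul_sum, ← sum_sub_distrib]
  refine sum_congr rfl fun k _ ↦ ?_
  simp only [pow_succ, pow_mul]
  ring

namespace IsPrimitiveRoot

section CommRing

variable {R : Type*} [CommRing R] [IsDomain R] {η : R} {m : ℕ}

theorem pow_sub_pow_eq_prod_range (hη : IsPrimitiveRoot η m) (hm : 0 < m) (x y : R) :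
    x ^ m - y ^ m = ∏ k ∈ range m, (x - η ^ k * y) := by
  simpa [eval_prod] using congrArg (eval x) (X_pow_sub_C_eq_prod hη hm (rfl : y ^ m = _))

theorem sub_pow_mul_ne_zero (hη : IsPrimitiveRoot η m) (hm : 0 < m) {x y : R}
    (h : x ^ m - y ^ m ≠ 0) {k : ℕ} (hk : k ∈ range m) : x - η ^ k * y ≠ 0 :=
  prod_ne_zero_iff.1 (hη.pow_sub_pow_eq_prod_range hm x y ▸ h) k hk

end CommRing

variable {𝕜 : Type*} [NontriviallyNormedField 𝕜] {η : 𝕜} {m : ℕ}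

theorem sum_inv_sub_pow_mul (hη : IsPrimitiveRoot η m) (hm : 0 < m) {z w : 𝕜}
    (h : w ^ m - z ^ m ≠ 0) :
    ∑ k ∈ range m, (w - η ^ k * z)⁻¹ = m * w ^ (m - 1) / (w ^ m - z ^ m) := by
  have hlog := logDeriv_prod (s := range m) (f := fun k x ↦ x - η ^ k * z) (x := w)
    (fun k hk ↦ hη.sub_pow_mul_ne_zero hm h hk) (fun k _ ↦ by fun_prop)
  have hprod : (fun x ↦ ∏ k ∈ range m, (x - η ^ k * z)) = fun x ↦ x ^ m - z ^ m :=
    funext fun x ↦ (hη.pow_sub_pow_eq_prod_range hm x z).symm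
  rw [hprod] at hlog
  simp only [logDeriv_apply, deriv_sub_const, deriv_id'', deriv_pow_field, one_div] at hlog
  exact hlog.symm

theorem sum_pow_div_sub_pow_mul_sq (hη : IsPrimitiveRoot η m) (hm : 0 < m) {z w : 𝕜}
    (h : w ^ m - z ^ m ≠ 0) :
    ∑ k ∈ range m, η ^ k / (w - η ^ k * z) ^ 2 =
      m ^ 2 * z ^ (m - 1) * w ^ (m - 1) / (w ^ m - z ^ m) ^ 2 := by
  have hsum : HasDerivAt (fun y ↦ ∑ k ∈ range m, (w - η ^ k * y)⁻¹)
      (∑ k ∈ range m, η ^ k / (w - η ^ k * z) ^ 2) z := by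
    refine HasDerivAt.fun_sum fun k hk ↦ ?_
    refine ((((hasDerivAt_id z).const_mul (η ^ k)).const_sub w).fun_inv
      (hη.sub_pow_mul_ne_zero hm h hk)).congr_deriv ?_
    simp
  have hclosed : HasDerivAt (fun y ↦ m * w ^ (m - 1) / (w ^ m - y ^ m))
      (m ^ 2 * z ^ (m - 1) * w ^ (m - 1) / (w ^ m - z ^ m) ^ 2) z := by
    have hden := (hasDerivAt_pow m z).const_sub (w ^ m)
    exact ((hasDerivAt_const z _).fun_div hden h).congr_deriv (by ring)
  have heq : (fun y ↦ ∑ k ∈ range m, (w - η ^ k * y)⁻¹) =ᶠ[𝓝 z]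
      fun y ↦ m * w ^ (m - 1) / (w ^ m - y ^ m) :=
    (((continuous_const.sub (continuous_pow m)).continuousAt).eventually_ne h).mono
      fun y hy ↦ hη.sum_inv_sub_pow_mul hm hy
  exact hsum.unique (hclosed.congr_of_eventuallyEq heq)

end IsPrimitiveRoot

theorem two_point_function_identity_general (p : ℕ) (hp : 2 ≤ p) (hpe : Even p) (ζ : ℂ)
    (hζ : IsPrimitiveRoot ζ p) (z w : ℂ)
    (hzw : ∀ ℓ : ℕ, w ≠ ζ ^ ℓ * z ∧ w ≠ -(ζ ^ ℓ * z)) :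
    ∑ ℓ ∈ Finset.range p, (-1 : ℂ) ^ ℓ * ζ ^ ℓ / (w - ζ ^ ℓ * z) ^ 2 =
      ((p : ℂ) ^ 2 / 4) * z ^ (p / 2 - 1) * w ^ (p / 2 - 1) *
        (1 / (z ^ (p / 2) - w ^ (p / 2)) ^ 2 + 1 / (z ^ (p / 2) + w ^ (p / 2)) ^ 2) := by
  obtain ⟨m, rfl⟩ := hpe
  rw [← two_mul] at hζ ⊢
  have hm : 0 < m := by omega
  have hζm : ζ ^ m = -1 := (hζ.pow (by omega) (mul_comm 2 m)).eq_neg_one_of_two_right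
  have hη : IsPrimitiveRoot (ζ ^ 2) m := hζ.pow (by omega) rfl
  have hne : (w ^ m - z ^ m) * (w ^ m + z ^ m) ≠ 0 := by
    rw [show (w ^ m - z ^ m) * (w ^ m + z ^ m) = w ^ (2 * m) - z ^ (2 * m) by ring,
      hζ.pow_sub_pow_eq_prod_range (by omega)]
    exact prod_ne_zero_iff.2 fun ℓ _ ↦ sub_ne_zero.2 (hzw ℓ).1
  obtain ⟨hsub, hadd⟩ := mul_ne_zero_iff.1 hne
  have hodd := hη.sum_pow_div_sub_pow_mul_sq hm (z := ζ * z) (w := w)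
    (by rwa [mul_pow, hζm, neg_one_mul, sub_neg_eq_add])
  rw [sum_range_two_mul_neg_one_pow_mul_div_sq, hη.sum_pow_div_sub_pow_mul_sq hm hsub, hodd]
  obtain ⟨n, rfl⟩ := Nat.exists_eq_add_one_of_ne_zero hm.ne'
  have hζn : ζ * ζ ^ n = -1 := by rw [← pow_succ', hζm]
  simp only [Nat.mul_div_cancel_left _ two_pos, Nat.add_sub_cancel, mul_pow, hζm]
  push_cast
  linear_combination (-((n + 1 : ℂ) ^ 2 * z ^ n * w ^ n / (w ^ (n + 1) + z ^ (n + 1)) ^ 2)) * hζn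

/-- The planar two-point function identity for the `(2,2,p)` (`p` even) Seifert model:
for `ζ` a primitive `p`-th root of unity and `w ≠ ±ζ^ℓ z` for all `ℓ`,
`Σ_{ℓ=0}^{p−1} (−1)^ℓ ζ^ℓ/(w − ζ^ℓ z)² = (p²/4) z^{p/2−1} w^{p/2−1}
  (1/(z^{p/2} − w^{p/2})² + 1/(z^{p/2} + w^{p/2})²)`. -/
theorem two_point_function_identity (p : ℕ) (hp : 2 ≤ p) (hpe : Even p) (ζ : ℂ)
    (hζ : IsPrimitiveRoot ζ p) (z w : ℂ) (hz : z ≠ 0) (hw : w ≠ 0)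
    (hzw : ∀ ℓ : ℕ, w ≠ ζ ^ ℓ * z ∧ w ≠ -(ζ ^ ℓ * z)) :
    ∑ ℓ ∈ Finset.range p, (-1 : ℂ) ^ ℓ * ζ ^ ℓ / (w - ζ ^ ℓ * z) ^ 2 =
      ((p : ℂ) ^ 2 / 4) * z ^ (p / 2 - 1) * w ^ (p / 2 - 1) *
        (1 / (z ^ (p / 2) - w ^ (p / 2)) ^ 2 + 1 / (z ^ (p / 2) + w ^ (p / 2)) ^ 2) :=
  two_point_function_identity_general p hp hpe ζ hζ z w hzw
end
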